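/- For a reaction network satisfying Assumptions 1 and 2, let V be an intermediate species with enzyme Ỹ in its connected component, and let Y be a non-intermediate species acting as an enzyme in a connected component whose set of substrates and products is 𝒮_V. Let X be a non-intermediate species with X ∈ 𝒮^{(α)} for some α ≥ 1 such that Y, Ỹ ∉ 𝒮^{(α)}. If a monomial y^r v appears in x^{(ℓ)} for some r ≥ 0 and ℓ ≥ 1, then X ∈ 𝒮_V. Moreover, either V reacts to X, or r ≥ 1, ℓ ≥ 2, and a monomial y^t v with t < r appears in z_w^{(i)} for some i ≤ ℓ−2, where Z_w is a species involved in a block of reactions Y+Z_w ⇄ W → Y + X of the network; if r ≥ 1 and ℓ is minimal with this property, then t = r−1. -/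

import Mathlib

/-!
Fix the enzyme `y` and follow the monomials `y ^ n * z`, with `z` a single species, through
the derivatives of a non-intermediate `w ≠ y`. Pure powers of `y` never appear, as no reactant
complex is a power of `y`, so the coefficient of `y ^ n * z` in `φ̇` only involves monomials
`y ^ n' * z'` of `φ`: the intermediate `U` of a block `Y + S ⇄ U → Y + S'` is fed by `Y`, `S`,
`S'` and `U` with the same exponent, and a non-intermediate `z` by `y ^ (n - 1) * U` and
`y ^ (n - 1) * z` for every block whose substrate complex is `y + z`. After multiplying the
coefficients by `(-1) ^ s`, and by `-1` on intermediates, all these weights are positive, so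
`y ^ n * z` appears in `w^{(s+1)}` iff one of its predecessors appears in `w^{(s)}`.

Following predecessors back from `y ^ r * v` in `x^{(ℓ)}` leads to `x` in `x^{(0)}`. Every
non-intermediate on the way lies in the partition class of `x`, and in a component of `y` only
if `x` does; this rules out the enzyme `Ỹ` of `v` as the neighbour of `v` on the chain and puts
`x` in `𝒮_V`. If `v` does not react to `x`, the chain leaves `x` through the intermediate `W`
of a block `y + Z_w ⇄ W → y + x` and continues from `Z_w` with one power of `y` less. As the
predecessor relation does not depend on the species being differentiated, the rest of the chain
shows that `y ^ (r - 1) * v` appears in a derivative of `Z_w` of order at most `ℓ - 2`.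
-/

open MvPolynomial Finsupp

variable {σ : Type*}

/-- The total (Lie) derivative of a polynomial `φ` associated to the polynomial vector
field `f`: `φ̇ = Σ_x (∂φ/∂x)·f x`. -/
noncomputable def lieD [Fintype σ] (f : σ → MvPolynomial σ ℝ)
    (φ : MvPolynomial σ ℝ) : MvPolynomial σ ℝ :=
  ∑ x : σ, MvPolynomial.pderiv x φ * f x

/-- Iterated total (Lie) derivative. -/
noncomputable def lieDIter [Fintype σ] (f : σ → MvPolynomial σ ℝ) :
    ℕ → MvPolynomial σ ℝ → MvPolynomial σ ℝ
  | 0, φ => φ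
  | n + 1, φ => lieD f (lieDIter f n φ)

/-- Indicator of a species inside a complex, as a real number. -/
def ind [DecidableEq σ] (a x : σ) : ℝ := if a = x then 1 else 0

/-- A chemical reaction network of the structural form of Assumption 1: the connected
components are indexed by `ι`; component `i` is
`Y i + S i 0 ⇄ U i 1 → Y i + S i 1 ⇄ U i 2 → ⋯ ⇄ U i (L i) → Y i + S i (L i)`,
with rate constants `a_{i,j}, b_{i,j}, c_{i,j}` for the reactions
`Y i + S i (j-1) → U i j`, `U i j → Y i + S i (j-1)`, `U i j → Y i + S i j`
(`1 ≤ j ≤ L i`). Only the values `S i j` for `j ≤ L i` and `U i j` for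
`1 ≤ j ≤ L i` are relevant. -/
structure A1Network (σ : Type*) where
  ι : Type
  [fintypeι : Fintype ι]
  L : ι → ℕ
  Lpos : ∀ i, 1 ≤ L i
  Y : ι → σ
  S : ι → ℕ → σ
  U : ι → ℕ → σ

attribute [instance] A1Network.fintypeι

namespace A1Network

variable [Fintype σ] [DecidableEq σ]

/-- Rate-constant index: component `i`, block `j+1` (for `j : Fin (L i)`), and
`0, 1, 2` for the constants `a, b, c` of the block. -/
def Param (N : A1Network σ) : Type := (i : N.ι) × Fin (N.L i) × Fin 3

instance (N : A1Network σ) : Fintype N.Param :=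
  inferInstanceAs (Fintype ((i : N.ι) × Fin (N.L i) × Fin 3))

/-- `x` is an intermediate species of the network. -/
def inter (N : A1Network σ) (x : σ) : Prop :=
  ∃ i, ∃ j : Fin (N.L i), x = N.U i ((j : ℕ) + 1)

/-- The non-intermediate `x₁` reacts with the non-intermediate `x₂`
(a reaction `x₁ + x₂ → U` exists). -/
def reactsWith (N : A1Network σ) (x₁ x₂ : σ) : Prop :=
  ∃ i, ∃ j : Fin (N.L i),
    (x₁ = N.Y i ∧ x₂ = N.S i (j : ℕ)) ∨ (x₂ = N.Y i ∧ x₁ = N.S i (j : ℕ))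

/-- The intermediate `u` reacts to the non-intermediate `x`
(a reaction `u → x + X₂` exists). -/
def reactsTo (N : A1Network σ) (u x : σ) : Prop :=
  ∃ i, ∃ j : Fin (N.L i), u = N.U i ((j : ℕ) + 1) ∧
    (x = N.Y i ∨ x = N.S i (j : ℕ) ∨ x = N.S i ((j : ℕ) + 1))

/-- The distinctness/uniqueness requirements of Assumption 1: the intermediates of the
entire network are pairwise distinct and distinct from all non-intermediates; the
non-intermediates of one component are pairwise distinct; each complex lies in a
unique connected component. -/
structure Assumption1 (N : A1Network σ) : Prop where
  U_inj : ∀ i (j : Fin (N.L i)) i' (j' : Fin (N.L i')),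
    N.U i ((j : ℕ) + 1) = N.U i' ((j' : ℕ) + 1) → i = i' ∧ (j : ℕ) = (j' : ℕ)
  U_ne_Y : ∀ i (j : Fin (N.L i)) i', N.U i ((j : ℕ) + 1) ≠ N.Y i'
  U_ne_S : ∀ i (j : Fin (N.L i)) i' j', j' ≤ N.L i' → N.U i ((j : ℕ) + 1) ≠ N.S i' j'
  S_inj : ∀ i j j', j ≤ N.L i → j' ≤ N.L i → N.S i j = N.S i j' → j = j'
  complex_unique : ∀ i i' j j', j ≤ N.L i → j' ≤ N.L i' →
    (∀ x : σ, ind (N.Y i) x + ind (N.S i j) x = ind (N.Y i') x + ind (N.S i' j') x) →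
    i = i'

/-- `part` is a partition of the species as in Assumption 2: intermediates form class `0`;
all the substrates and products of a component lie in one class `α ≥ 1` which contains
neither the enzyme of the component nor any intermediate. -/
def IsPartition (N : A1Network σ) (part : σ → ℕ) : Prop :=
  (∀ x, N.inter x → part x = 0) ∧
  (∀ i : N.ι, ∃ α, 1 ≤ α ∧ (∀ j, j ≤ N.L i → part (N.S i j) = α) ∧
    part (N.Y i) ≠ α ∧ part (N.Y i) ≠ 0)

/-- Assumption 2: there exists a partition as above. -/
def Assumption2 (N : A1Network σ) : Prop := ∃ part, N.IsPartition part

/-- The mass-action right-hand side of the induced dynamical system: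
`ẋ = Σ_{y→y'} k_{yy'} x^y (y'-y)`. -/
noncomputable def rhs (N : A1Network σ) (k : N.Param → ℝ) (x : σ) : MvPolynomial σ ℝ :=
  ∑ i : N.ι, ∑ j : Fin (N.L i),
    (C (k ⟨i, j, 0⟩ *
          (ind (N.U i ((j : ℕ) + 1)) x - ind (N.Y i) x - ind (N.S i (j : ℕ)) x)) *
        (X (N.Y i) * X (N.S i (j : ℕ)))
      + C (k ⟨i, j, 1⟩ *
          (ind (N.Y i) x + ind (N.S i (j : ℕ)) x - ind (N.U i ((j : ℕ) + 1)) x)) *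
        X (N.U i ((j : ℕ) + 1))
      + C (k ⟨i, j, 2⟩ *
          (ind (N.Y i) x + ind (N.S i ((j : ℕ) + 1)) x - ind (N.U i ((j : ℕ) + 1)) x)) *
        X (N.U i ((j : ℕ) + 1)))

/-- `x^{(ℓ)}(x, k)`: the `ℓ`-th iterated total derivative of the variable `x`. -/
noncomputable def deriv (N : A1Network σ) (k : N.Param → ℝ) (ℓ : ℕ) (x : σ) :
    MvPolynomial σ ℝ :=
  lieDIter (N.rhs k) ℓ (X x)

/-- The map `ψ` on rate constants is identifiable from the set of variables `T` with `D`
derivatives: whenever two positive rate vectors give the same derivatives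
`x^{(ℓ)}`, `1 ≤ ℓ ≤ D`, `x ∈ T`, as polynomials, the values of `ψ` agree. -/
def IdentifiableFrom {α : Type*} (N : A1Network σ) (ψ : (N.Param → ℝ) → α)
    (T : Set σ) (D : ℕ) : Prop :=
  ∀ k₁ k₂ : N.Param → ℝ, (∀ r, 0 < k₁ r) → (∀ r, 0 < k₂ r) →
    (∀ x ∈ T, ∀ ℓ, 1 ≤ ℓ → ℓ ≤ D → N.deriv k₁ ℓ x = N.deriv k₂ ℓ x) →
    ψ k₁ = ψ k₂

end A1Network

namespace Finsupp

theorem single_one_le_single_iff {a y : σ} {n : ℕ} :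
    single a 1 ≤ single y n ↔ a = y ∧ 1 ≤ n := by
  rw [single_le_iff]
  rcases eq_or_ne a y with rfl | hay
  · simp
  · simp [single_eq_of_ne hay, hay]

theorem single_one_le_single_add_single_iff {a y z : σ} {n : ℕ} (hyz : y ≠ z) :
    single a 1 ≤ single y n + single z 1 ↔ (a = y ∧ 1 ≤ n) ∨ a = z := by
  rw [single_le_iff, add_apply]
  rcases eq_or_ne a z with rfl | haz
  · simp
  · rw [single_eq_of_ne haz, add_zero, ← single_le_iff, single_one_le_single_iff]
    simp [haz]

theorem single_add_single_le_single_add_single_iff {a b y z : σ} {n : ℕ} (hab : a ≠ b)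
    (hyz : y ≠ z) :
    single a 1 + single b 1 ≤ single y n + single z 1 ↔
      1 ≤ n ∧ (a = y ∧ b = z ∨ a = z ∧ b = y) := by
  constructor
  · intro h
    have ha := (single_one_le_single_add_single_iff hyz).1 (le_self_add.trans h)
    have hb := (single_one_le_single_add_single_iff hyz).1 (le_add_self.trans h)
    rcases ha with ⟨rfl, hn⟩ | rfl <;> rcases hb with ⟨rfl, hn'⟩ | rfl <;> tauto
  · rintro ⟨hn, ⟨rfl, rfl⟩ | ⟨rfl, rfl⟩⟩
    · gcongr
    · rw [add_comm (single a 1)]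
      gcongr

theorem not_single_add_single_le_single {a b y : σ} {n : ℕ} (hab : a ≠ b) :
    ¬ single a 1 + single b 1 ≤ single y n := fun h =>
  hab <| (single_one_le_single_iff.1 (le_self_add.trans h)).1.trans
    (single_one_le_single_iff.1 (le_add_self.trans h)).1.symm

theorem single_eq_single_add_single_iff {x y z : σ} {n : ℕ} (hxy : x ≠ y) :
    single x 1 = single y n + single z 1 ↔ n = 0 ∧ z = x := by
  constructor
  · intro h
    have hn : n = 0 ∧ single z 1 y = 0 := by
      simpa [single_eq_of_ne' hxy] using (DFunLike.congr_fun h y).symm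
    rw [hn.1, single_zero, zero_add, single_left_inj one_ne_zero] at h
    exact ⟨hn.1, h.symm⟩
  · rintro ⟨rfl, rfl⟩
    simp

end Finsupp

namespace MvPolynomial

variable {R : Type*} [CommSemiring R]

theorem coeff_C_mul_X_mul (m : σ →₀ ℕ) (c : R) (a : σ) (p : MvPolynomial σ R) :
    coeff m (C c * X a * p) = if single a 1 ≤ m then c * coeff (m - single a 1) p else 0 := by
  rw [X, C_mul_monomial, mul_one, coeff_monomial_mul']

theorem coeff_C_mul_X_mul_X_mul (m : σ →₀ ℕ) (c : R) (a b : σ) (p : MvPolynomial σ R) :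
    coeff m (C c * (X a * X b) * p) =
      if single a 1 + single b 1 ≤ m then c * coeff (m - (single a 1 + single b 1)) p else 0 := by
  rw [X, X, monomial_mul, mul_one, C_mul_monomial, mul_one, coeff_monomial_mul']

end MvPolynomial

namespace A1Network

def IsReactantPair (N : A1Network σ) (y w : σ) (i : N.ι) (j : Fin (N.L i)) : Prop :=
  N.Y i = y ∧ N.S i j = w ∨ N.Y i = w ∧ N.S i j = y

instance [DecidableEq σ] (N : A1Network σ) (y w : σ) (i : N.ι) (j : Fin (N.L i)) :
    Decidable (N.IsReactantPair y w i j) :=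
  inferInstanceAs (Decidable (_ ∨ _))

/-- The set `𝒮_U` of the paper, for the intermediates `U` of component `i`. -/
def substrateSet (N : A1Network σ) (i : N.ι) : Set σ :=
  {z | ∃ j ≤ N.L i, z = N.S i j}

theorem inter_U (N : A1Network σ) (i : N.ι) (j : Fin (N.L i)) :
    N.inter (N.U i ((j : ℕ) + 1)) :=
  ⟨i, j, rfl⟩

namespace IsPartition

variable {N : A1Network σ} {part : σ → ℕ}

theorem part_S_eq (hpart : N.IsPartition part) {i : N.ι} {j j' : ℕ} (hj : j ≤ N.L i)
    (hj' : j' ≤ N.L i) : part (N.S i j) = part (N.S i j') := by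
  obtain ⟨α, -, hS, -⟩ := hpart.2 i
  rw [hS j hj, hS j' hj']

theorem part_Y_ne_part_S (hpart : N.IsPartition part) {i : N.ι} {j : ℕ} (hj : j ≤ N.L i) :
    part (N.Y i) ≠ part (N.S i j) := by
  obtain ⟨α, -, hS, hY, -⟩ := hpart.2 i
  rwa [hS j hj]

theorem Y_ne_S (hpart : N.IsPartition part) (i : N.ι) (j : ℕ) (hj : j ≤ N.L i) :
    N.Y i ≠ N.S i j :=
  fun h => hpart.part_Y_ne_part_S hj (congrArg part h)

end IsPartition

namespace IsReactantPair

variable {N : A1Network σ} {y z : σ} {i : N.ι} {j : Fin (N.L i)}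

theorem ne (hp : N.IsReactantPair y z i j) (hYS : ∀ i, ∀ j ≤ N.L i, N.Y i ≠ N.S i j) :
    z ≠ y := by
  rcases hp with ⟨rfl, rfl⟩ | ⟨rfl, rfl⟩
  exacts [(hYS i j j.isLt.le).symm, hYS i j j.isLt.le]

theorem eq_of_part_ne {part : σ → ℕ} (hp : N.IsReactantPair y z i j)
    (hpart : N.IsPartition part) (h : part (N.S i ((j : ℕ) + 1)) ≠ part y) :
    N.Y i = y ∧ N.S i j = z := by
  refine hp.resolve_right fun hp' => h ?_
  rw [← hp'.2, hpart.part_S_eq j.isLt j.isLt.le]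

end IsReactantPair

section Structure

variable [DecidableEq σ] {N : A1Network σ}

theorem Assumption1.not_inter_Y (h1 : N.Assumption1) (i : N.ι) : ¬ N.inter (N.Y i) := by
  rintro ⟨i', j', h⟩
  exact h1.U_ne_Y i' j' i h.symm

theorem Assumption1.not_inter_S (h1 : N.Assumption1) {i : N.ι} {j : ℕ} (hj : j ≤ N.L i) :
    ¬ N.inter (N.S i j) := by
  rintro ⟨i', j', h⟩
  exact h1.U_ne_S i' j' i j hj h.symm

theorem IsReactantPair.not_inter {y z : σ} {i : N.ι} {j : Fin (N.L i)}
    (hp : N.IsReactantPair y z i j) (h1 : N.Assumption1) : ¬ N.inter z := by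
  rcases hp with ⟨-, rfl⟩ | ⟨rfl, -⟩
  exacts [h1.not_inter_S j.isLt.le, h1.not_inter_Y i]

theorem Assumption1.eq_of_Y_eq_of_S_eq (h1 : N.Assumption1) {i i' : N.ι} {j j' : ℕ}
    (hj : j ≤ N.L i) (hj' : j' ≤ N.L i') (hY : N.Y i = N.Y i') (hS : N.S i j = N.S i' j') :
    i = i' :=
  h1.complex_unique i i' j j' hj hj' fun _ => by rw [hY, hS]

/-- The standing hypotheses for following the monomials `y ^ n * z` through the derivatives
of the species `w`. -/
structure AppearanceHyp (N : A1Network σ) (k : N.Param → ℝ) (y w : σ) : Prop where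
  assumption1 : N.Assumption1
  Y_ne_S : ∀ i, ∀ j ≤ N.L i, N.Y i ≠ N.S i j
  rate_pos : ∀ r, 0 < k r
  enzyme_not_inter : ¬ N.inter y
  source_not_inter : ¬ N.inter w
  source_ne_enzyme : w ≠ y

theorem AppearanceHyp.withSource {k : N.Param → ℝ} {y w : σ} (H : N.AppearanceHyp k y w)
    {w' : σ} (hw' : ¬ N.inter w') (hw'y : w' ≠ y) : N.AppearanceHyp k y w' :=
  { H with source_not_inter := hw', source_ne_enzyme := hw'y }

end Structure

variable [Fintype σ] [DecidableEq σ]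

theorem lieD_rhs (N : A1Network σ) (k : N.Param → ℝ) (φ : MvPolynomial σ ℝ) :
    lieD (N.rhs k) φ = ∑ i : N.ι, ∑ j : Fin (N.L i),
      (C (k ⟨i, j, 0⟩) * (X (N.Y i) * X (N.S i j)) *
          (pderiv (N.U i ((j : ℕ) + 1)) φ - pderiv (N.Y i) φ - pderiv (N.S i j) φ)
        + C (k ⟨i, j, 1⟩) * X (N.U i ((j : ℕ) + 1)) *
          (pderiv (N.Y i) φ + pderiv (N.S i j) φ - pderiv (N.U i ((j : ℕ) + 1)) φ)
        + C (k ⟨i, j, 2⟩) * X (N.U i ((j : ℕ) + 1)) *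
          (pderiv (N.Y i) φ + pderiv (N.S i ((j : ℕ) + 1)) φ
            - pderiv (N.U i ((j : ℕ) + 1)) φ)) := by
  simp only [lieD, rhs, Finset.mul_sum]
  rw [Finset.sum_comm]
  refine Finset.sum_congr rfl fun i _ => ?_
  rw [Finset.sum_comm]
  refine Finset.sum_congr rfl fun j _ => ?_
  simp [ind, mul_add, mul_sub, add_mul, sub_mul, Finset.sum_add_distrib, Finset.sum_sub_distrib,
    apply_ite C, mul_ite, ite_mul]
  ring

section Recursions

variable {N : A1Network σ} (k : N.Param → ℝ) {y : σ}

theorem coeff_lieD_rhs_single (hYS : ∀ i, ∀ j ≤ N.L i, N.Y i ≠ N.S i j) (hy : ¬ N.inter y)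
    (φ : MvPolynomial σ ℝ) (n : ℕ) :
    coeff (single y n) (lieD (N.rhs k) φ) = 0 := by
  rw [lieD_rhs, coeff_sum]
  refine Finset.sum_eq_zero fun i _ => ?_
  rw [coeff_sum]
  refine Finset.sum_eq_zero fun j _ => ?_
  have hUy : N.U i ((j : ℕ) + 1) ≠ y := fun h => hy ⟨i, j, h.symm⟩
  simp [coeff_C_mul_X_mul_X_mul, coeff_C_mul_X_mul, hUy,
    not_single_add_single_le_single (hYS i j j.isLt.le)]

theorem coeff_lieD_rhs_inter (h1 : N.Assumption1) (hYS : ∀ i, ∀ j ≤ N.L i, N.Y i ≠ N.S i j)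
    (hy : ¬ N.inter y) (φ : MvPolynomial σ ℝ) (n : ℕ) (i₀ : N.ι) (j₀ : Fin (N.L i₀)) :
    coeff (single y n + single (N.U i₀ ((j₀ : ℕ) + 1)) 1) (lieD (N.rhs k) φ) =
      k ⟨i₀, j₀, 1⟩ * coeff (single y n) (pderiv (N.Y i₀) φ + pderiv (N.S i₀ j₀) φ
          - pderiv (N.U i₀ ((j₀ : ℕ) + 1)) φ)
        + k ⟨i₀, j₀, 2⟩ * coeff (single y n) (pderiv (N.Y i₀) φ
          + pderiv (N.S i₀ ((j₀ : ℕ) + 1)) φ - pderiv (N.U i₀ ((j₀ : ℕ) + 1)) φ) := by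
  set d := single y n + single (N.U i₀ ((j₀ : ℕ) + 1)) 1
  have hUy : ∀ i (j : Fin (N.L i)), y ≠ N.U i ((j : ℕ) + 1) := fun i j h => hy ⟨i, j, h⟩
  have hU : ∀ i (j : Fin (N.L i)),
      single (N.U i ((j : ℕ) + 1)) 1 ≤ d ↔ i = i₀ ∧ (j : ℕ) = j₀ := by
    intro i j
    rw [single_one_le_single_add_single_iff (hUy i₀ j₀)]
    refine ⟨fun h => ?_, fun ⟨hi, hj⟩ => Or.inr (by subst hi; rw [hj])⟩
    rcases h with ⟨h, -⟩ | h
    exacts [absurd h.symm (hUy i j), h1.U_inj i j i₀ j₀ h]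
  have hYS₀ : ∀ i (j : Fin (N.L i)), ¬ single (N.Y i) 1 + single (N.S i j) 1 ≤ d := by
    intro i j h
    rcases (single_add_single_le_single_add_single_iff (hYS i j j.isLt.le) (hUy i₀ j₀)).1 h with
      ⟨-, ⟨-, h⟩ | ⟨h, -⟩⟩
    exacts [h1.U_ne_S i₀ j₀ i j j.isLt.le h.symm, h1.U_ne_Y i₀ j₀ i h.symm]
  rw [lieD_rhs, coeff_sum, Finset.sum_eq_single i₀, coeff_sum, Finset.sum_eq_single j₀]
  · simp [d, coeff_C_mul_X_mul_X_mul, coeff_C_mul_X_mul, hYS₀]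
  · intro j _ hj
    simp [coeff_C_mul_X_mul_X_mul, coeff_C_mul_X_mul, hYS₀, hU, Fin.val_inj, hj]
  · simp
  · intro i _ hi
    rw [coeff_sum]
    refine Finset.sum_eq_zero fun j _ => ?_
    simp [coeff_C_mul_X_mul_X_mul, coeff_C_mul_X_mul, hYS₀, hU, hi]
  · simp

theorem coeff_lieD_rhs_nonint (hYS : ∀ i, ∀ j ≤ N.L i, N.Y i ≠ N.S i j) (hy : ¬ N.inter y)
    {w : σ} (hw : ¬ N.inter w) (hwy : w ≠ y) (φ : MvPolynomial σ ℝ)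
    (hφ : ∀ m, coeff (single y m) φ = 0) (n : ℕ) :
    coeff (single y n + single w 1) (lieD (N.rhs k) φ) =
      ∑ i : N.ι, ∑ j : Fin (N.L i), if 1 ≤ n ∧ N.IsReactantPair y w i j then
        k ⟨i, j, 0⟩ * (coeff (single y (n - 1) + single (N.U i ((j : ℕ) + 1)) 1) φ
          - coeff (single y (n - 1) + single w 1) φ) else 0 := by
  rw [lieD_rhs, coeff_sum]
  refine Finset.sum_congr rfl fun i _ => ?_
  rw [coeff_sum]
  refine Finset.sum_congr rfl fun j _ => ?_
  have hUy : y ≠ N.U i ((j : ℕ) + 1) := fun h => hy ⟨i, j, h⟩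
  have hUw : w ≠ N.U i ((j : ℕ) + 1) := fun h => hw ⟨i, j, h⟩
  have hU : ¬ single (N.U i ((j : ℕ) + 1)) 1 ≤ single y n + single w 1 := by
    rw [single_one_le_single_add_single_iff hwy.symm]
    rintro (⟨h, -⟩ | h)
    exacts [hUy h.symm, hUw h.symm]
  have hle := single_add_single_le_single_add_single_iff (n := n) (hYS i j j.isLt.le) hwy.symm
  rw [coeff_add, coeff_add, coeff_C_mul_X_mul, coeff_C_mul_X_mul, if_neg hU, if_neg hU,
    add_zero, add_zero, coeff_C_mul_X_mul_X_mul]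
  by_cases h : 1 ≤ n ∧ N.IsReactantPair y w i j
  · rw [if_pos (hle.2 h), if_pos h]
    obtain ⟨hn, hYS'⟩ := h
    obtain ⟨m, rfl⟩ := Nat.exists_eq_add_of_le' hn
    have hsub : single y (m + 1) + single w 1 - (single (N.Y i) 1 + single (N.S i j) 1) =
        single y m := by
      rcases hYS' with ⟨hY, hS⟩ | ⟨hY, hS⟩ <;> rw [hY, hS, single_add, add_assoc]
      · rw [add_tsub_cancel_right]
      · rw [add_comm (single w 1), add_tsub_cancel_right]
    rw [hsub, coeff_sub, coeff_sub, coeff_pderiv, coeff_pderiv, coeff_pderiv,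
      single_eq_of_ne' hUy, Nat.add_sub_cancel]
    rcases hYS' with ⟨hY, hS⟩ | ⟨hY, hS⟩ <;>
      simp [hY, hS, ← single_add, hφ, single_eq_of_ne' hwy.symm]
  · rw [if_neg (mt hle.1 h), if_neg h]

end Recursions

section Appearance

variable {N : A1Network σ} (k : N.Param → ℝ) {y w : σ}

/-- The monomial `y ^ n * z` appears in the `s`-th derivative of the species `w`. -/
def Appears (N : A1Network σ) (k : N.Param → ℝ) (y : σ) (n : ℕ) (z w : σ) (s : ℕ) :
    Prop :=
  coeff (single y n + single z 1) (N.deriv k s w) ≠ 0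

/-- With these signs the recursions `signedCoeff_succ_inter` and `signedCoeff_succ_nonint` have
nonnegative weights, so that coefficients can never cancel. -/
noncomputable def signedCoeff (N : A1Network σ) (k : N.Param → ℝ) (y : σ) (n : ℕ) (z w : σ)
    (s : ℕ) : ℝ :=
  open Classical in
  (-1) ^ s * (if N.inter z then -1 else 1) * coeff (single y n + single z 1) (N.deriv k s w)

theorem deriv_succ (s : ℕ) (w : σ) :
    N.deriv k (s + 1) w = lieD (N.rhs k) (N.deriv k s w) := rfl

theorem appears_zero_iff (hwy : w ≠ y) {n : ℕ} {z : σ} :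
    N.Appears k y n z w 0 ↔ n = 0 ∧ z = w := by
  simp [Appears, deriv, lieDIter, coeff_X, single_eq_single_add_single_iff hwy]

theorem coeff_deriv_single (hYS : ∀ i, ∀ j ≤ N.L i, N.Y i ≠ N.S i j) (hy : ¬ N.inter y)
    (hwy : w ≠ y) (s n : ℕ) : coeff (single y n) (N.deriv k s w) = 0 := by
  cases s with
  | zero =>
    rw [deriv, lieDIter, coeff_X, if_neg]
    intro h
    rcases (single_eq_single_iff _ _ _ _).1 h with ⟨h, -⟩ | ⟨h, -⟩
    exacts [hwy h, one_ne_zero h]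
  | succ s => exact coeff_lieD_rhs_single k hYS hy _ n

theorem signedCoeff_ne_zero_iff {n : ℕ} {z : σ} {s : ℕ} :
    N.signedCoeff k y n z w s ≠ 0 ↔ N.Appears k y n z w s := by
  unfold signedCoeff Appears
  split_ifs <;> simp

theorem signedCoeff_self (hYS : ∀ i, ∀ j ≤ N.L i, N.Y i ≠ N.S i j) (hy : ¬ N.inter y)
    (hwy : w ≠ y) (n s : ℕ) : N.signedCoeff k y n y w s = 0 := by
  rw [signedCoeff, ← single_add, coeff_deriv_single k hYS hy hwy, mul_zero]

theorem signedCoeff_succ_inter (h1 : N.Assumption1)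
    (hYS : ∀ i, ∀ j ≤ N.L i, N.Y i ≠ N.S i j) (hy : ¬ N.inter y) (n s : ℕ) (i : N.ι)
    (j : Fin (N.L i)) :
    N.signedCoeff k y n (N.U i ((j : ℕ) + 1)) w (s + 1) =
      k ⟨i, j, 1⟩ * ((single y n (N.Y i) + 1 : ℝ) * N.signedCoeff k y n (N.Y i) w s
          + (single y n (N.S i j) + 1 : ℝ) * N.signedCoeff k y n (N.S i j) w s
          + N.signedCoeff k y n (N.U i ((j : ℕ) + 1)) w s)
        + k ⟨i, j, 2⟩ * ((single y n (N.Y i) + 1 : ℝ) * N.signedCoeff k y n (N.Y i) w s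
          + (single y n (N.S i ((j : ℕ) + 1)) + 1 : ℝ) *
            N.signedCoeff k y n (N.S i ((j : ℕ) + 1)) w s
          + N.signedCoeff k y n (N.U i ((j : ℕ) + 1)) w s) := by
  have hUy : y ≠ N.U i ((j : ℕ) + 1) := fun h => hy ⟨i, j, h⟩
  simp only [signedCoeff, deriv_succ, coeff_lieD_rhs_inter k h1 hYS hy, coeff_add, coeff_sub,
    coeff_pderiv, N.inter_U, h1.not_inter_Y, h1.not_inter_S j.isLt.le, h1.not_inter_S j.isLt,
    if_true, if_false, single_eq_of_ne' hUy, pow_succ]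
  push_cast
  ring

theorem signedCoeff_succ_nonint (hYS : ∀ i, ∀ j ≤ N.L i, N.Y i ≠ N.S i j)
    (hy : ¬ N.inter y) (hwy : w ≠ y) {z : σ} (hz : ¬ N.inter z) (hzy : z ≠ y) (n s : ℕ) :
    N.signedCoeff k y n z w (s + 1) =
      ∑ i : N.ι, ∑ j : Fin (N.L i), if 1 ≤ n ∧ N.IsReactantPair y z i j then
        k ⟨i, j, 0⟩ * (N.signedCoeff k y (n - 1) (N.U i ((j : ℕ) + 1)) w s
          + N.signedCoeff k y (n - 1) z w s) else 0 := by
  simp only [signedCoeff, deriv_succ,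
    coeff_lieD_rhs_nonint k hYS hy hz hzy _ (coeff_deriv_single k hYS hy hwy s), Finset.mul_sum,
    mul_ite, mul_zero, hz, N.inter_U, if_true, if_false, pow_succ]
  refine Finset.sum_congr rfl fun i _ => Finset.sum_congr rfl fun j _ => ?_
  split_ifs
  · ring
  · rfl

end Appearance

namespace AppearanceHyp

variable {N : A1Network σ} {k : N.Param → ℝ} {y w : σ}

theorem signedCoeff_nonneg (H : N.AppearanceHyp k y w) (n : ℕ) (z : σ) (s : ℕ) :
    0 ≤ N.signedCoeff k y n z w s := by
  obtain ⟨h1, hYS, hk, hy, hw, hwy⟩ := H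
  induction s generalizing n z with
  | zero =>
    by_cases h : N.Appears k y n z w 0
    · obtain ⟨rfl, rfl⟩ := (appears_zero_iff k hwy).1 h
      simp [signedCoeff, hw, deriv, lieDIter, coeff_X]
    · rw [Appears, not_not] at h
      simp [signedCoeff, h]
  | succ s ih =>
    by_cases hz : N.inter z
    · obtain ⟨i, j, rfl⟩ := hz
      have := ih n (N.Y i); have := ih n (N.S i j); have := ih n (N.S i ((j : ℕ) + 1))
      have := ih n (N.U i ((j : ℕ) + 1)); have := hk ⟨i, j, 1⟩; have := hk ⟨i, j, 2⟩
      rw [signedCoeff_succ_inter k h1 hYS hy]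
      positivity
    · rcases eq_or_ne z y with rfl | hzy
      · rw [signedCoeff_self k hYS hy hwy]
      rw [signedCoeff_succ_nonint k hYS hy hwy hz hzy]
      refine Finset.sum_nonneg fun i _ => Finset.sum_nonneg fun j _ => ?_
      split_ifs
      · exact mul_nonneg (hk _).le (add_nonneg (ih _ _) (ih _ _))
      · rfl

theorem appears_iff_pos (H : N.AppearanceHyp k y w) {n : ℕ} {z : σ} {s : ℕ} :
    N.Appears k y n z w s ↔ 0 < N.signedCoeff k y n z w s := by
  rw [← signedCoeff_ne_zero_iff, (H.signedCoeff_nonneg n z s).lt_iff_ne']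

theorem not_appears_self (H : N.AppearanceHyp k y w) (n s : ℕ) :
    ¬ N.Appears k y n y w s := by
  rw [← signedCoeff_ne_zero_iff, not_not,
    signedCoeff_self k H.Y_ne_S H.enzyme_not_inter H.source_ne_enzyme]

theorem ne_of_appears (H : N.AppearanceHyp k y w) {n : ℕ} {z : σ} {s : ℕ}
    (h : N.Appears k y n z w s) : z ≠ y := by
  rintro rfl
  exact H.not_appears_self n s h

theorem appears_succ_inter_iff (H : N.AppearanceHyp k y w) (n s : ℕ) (i : N.ι)
    (j : Fin (N.L i)) :
    N.Appears k y n (N.U i ((j : ℕ) + 1)) w (s + 1) ↔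
      N.Appears k y n (N.Y i) w s ∨ N.Appears k y n (N.S i j) w s ∨
        N.Appears k y n (N.S i ((j : ℕ) + 1)) w s ∨
        N.Appears k y n (N.U i ((j : ℕ) + 1)) w s := by
  simp only [H.appears_iff_pos]
  rw [signedCoeff_succ_inter k H.assumption1 H.Y_ne_S H.enzyme_not_inter]
  have hY := H.signedCoeff_nonneg n (N.Y i) s
  have hS := H.signedCoeff_nonneg n (N.S i j) s
  have hS' := H.signedCoeff_nonneg n (N.S i ((j : ℕ) + 1)) s
  have hU := H.signedCoeff_nonneg n (N.U i ((j : ℕ) + 1)) s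
  have := H.rate_pos ⟨i, j, 1⟩
  have := H.rate_pos ⟨i, j, 2⟩
  constructor
  · intro h
    by_contra! hall
    obtain ⟨hY', hS'', hS''', hU'⟩ := hall
    rw [le_antisymm hY' hY, le_antisymm hS'' hS, le_antisymm hS''' hS', le_antisymm hU' hU] at h
    simp at h
  · rintro (h | h | h | h) <;> positivity

theorem appears_succ_iff (H : N.AppearanceHyp k y w) {z : σ} (hz : ¬ N.inter z) (hzy : z ≠ y)
    (n s : ℕ) :
    N.Appears k y n z w (s + 1) ↔ 1 ≤ n ∧ ∃ i j, N.IsReactantPair y z i j ∧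
      (N.Appears k y (n - 1) (N.U i ((j : ℕ) + 1)) w s ∨ N.Appears k y (n - 1) z w s) := by
  simp only [H.appears_iff_pos]
  rw [signedCoeff_succ_nonint k H.Y_ne_S H.enzyme_not_inter H.source_ne_enzyme hz hzy]
  have hU := fun i (j : Fin (N.L i)) => H.signedCoeff_nonneg (n - 1) (N.U i ((j : ℕ) + 1)) s
  have hz := H.signedCoeff_nonneg (n - 1) z s
  have hterm : ∀ i (j : Fin (N.L i)), 0 ≤ if 1 ≤ n ∧ N.IsReactantPair y z i j then
      k ⟨i, j, 0⟩ * (N.signedCoeff k y (n - 1) (N.U i ((j : ℕ) + 1)) w s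
        + N.signedCoeff k y (n - 1) z w s) else 0 := by
    intro i j
    split_ifs
    · exact mul_nonneg (H.rate_pos _).le (add_nonneg (hU i j) hz)
    · rfl
  constructor
  · intro h
    obtain ⟨i, -, hi⟩ := Finset.exists_ne_zero_of_sum_ne_zero h.ne'
    obtain ⟨j, -, hj⟩ := Finset.exists_ne_zero_of_sum_ne_zero hi
    split_ifs at hj with hc
    · refine ⟨hc.1, i, j, hc.2, ?_⟩
      by_contra! hall
      exact hj (by rw [le_antisymm hall.1 (hU i j), le_antisymm hall.2 hz]; simp)
    · exact absurd rfl hj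
  · rintro ⟨hn, i, j, hp, h⟩
    refine Finset.sum_pos' (fun i _ => Finset.sum_nonneg fun j _ => hterm i j) ⟨i, by simp, ?_⟩
    refine Finset.sum_pos' (fun j _ => hterm i j) ⟨j, by simp, ?_⟩
    rw [if_pos ⟨hn, hp⟩]
    have := hU i j
    have := H.rate_pos ⟨i, j, 0⟩
    rcases h with h | h <;> positivity

theorem appears_succ_of_isReactantPair (H : N.AppearanceHyp k y w) {z : σ} {i : N.ι}
    {j : Fin (N.L i)} (hp : N.IsReactantPair y z i j) {n s : ℕ} (h : N.Appears k y n z w s) :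
    N.Appears k y (n + 1) z w (s + 1) := by
  rw [H.appears_succ_iff (hp.not_inter H.assumption1) (hp.ne H.Y_ne_S)]
  exact ⟨le_add_self, i, j, hp, Or.inr (by simpa using h)⟩

theorem appears_succ_of_appears_inter (H : N.AppearanceHyp k y w) {z : σ} {i : N.ι}
    {j : Fin (N.L i)} (hp : N.IsReactantPair y z i j) {n s : ℕ}
    (h : N.Appears k y n (N.U i ((j : ℕ) + 1)) w s) : N.Appears k y (n + 1) z w (s + 1) := by
  rw [H.appears_succ_iff (hp.not_inter H.assumption1) (hp.ne H.Y_ne_S)]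
  exact ⟨le_add_self, i, j, hp, Or.inl (by simpa using h)⟩

theorem appears_succ_inter (H : N.AppearanceHyp k y w) {z : σ} {i : N.ι} {j : Fin (N.L i)}
    (hz : z = N.Y i ∨ z = N.S i j ∨ z = N.S i ((j : ℕ) + 1)) {n s : ℕ}
    (h : N.Appears k y n z w s) : N.Appears k y n (N.U i ((j : ℕ) + 1)) w (s + 1) := by
  rw [H.appears_succ_inter_iff]
  rcases hz with rfl | rfl | rfl <;> simp [h]

theorem appears_self {z : σ} (H : N.AppearanceHyp k y z) {i : N.ι} {j : Fin (N.L i)}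
    (hp : N.IsReactantPair y z i j) (m : ℕ) : N.Appears k y m z z m := by
  induction m with
  | zero => exact (appears_zero_iff k H.source_ne_enzyme).2 ⟨rfl, rfl⟩
  | succ m ih => exact H.appears_succ_of_isReactantPair hp ih

theorem le_of_appears (H : N.AppearanceHyp k y w) {n : ℕ} {z : σ} {s : ℕ}
    (h : N.Appears k y n z w s) : n ≤ s := by
  induction s generalizing n z with
  | zero => exact ((appears_zero_iff k H.source_ne_enzyme).1 h).1.le
  | succ s ih =>
    by_cases hz : N.inter z
    · obtain ⟨i, j, rfl⟩ := hz
      rcases (H.appears_succ_inter_iff n s i j).1 h with h | h | h | h <;>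
        exact (ih h).trans s.le_succ
    · obtain ⟨hn, i, j, -, h | h⟩ := (H.appears_succ_iff hz (H.ne_of_appears h) n s).1 h <;>
        have := ih h <;> omega

theorem exists_appears_of_appears_inter (H : N.AppearanceHyp k y w) {n s : ℕ} {i : N.ι}
    {j : Fin (N.L i)} (h : N.Appears k y n (N.U i ((j : ℕ) + 1)) w s) :
    ∃ s' < s, ∃ z, (z = N.Y i ∨ z = N.S i j ∨ z = N.S i ((j : ℕ) + 1)) ∧
      N.Appears k y n z w s' := by
  induction s with
  | zero =>
    exact absurd (((appears_zero_iff k H.source_ne_enzyme).1 h).2 ▸ N.inter_U i j)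
      H.source_not_inter
  | succ s ih =>
    rcases (H.appears_succ_inter_iff n s i j).1 h with h | h | h | h
    · exact ⟨s, s.lt_succ_self, _, Or.inl rfl, h⟩
    · exact ⟨s, s.lt_succ_self, _, Or.inr (Or.inl rfl), h⟩
    · exact ⟨s, s.lt_succ_self, _, Or.inr (Or.inr rfl), h⟩
    · obtain ⟨s', hs', hz⟩ := ih h
      exact ⟨s', hs'.trans s.lt_succ_self, hz⟩

/-- A predecessor through the intermediate `U i (j + 1)` can only be `z` itself or the product
`S i (j + 1)`: the remaining species of the complex `y + z` is `y`, and pure powers of `y`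
never appear. -/
theorem exists_pred_of_appears_succ (H : N.AppearanceHyp k y w) {n s : ℕ} {z : σ}
    (hz : ¬ N.inter z) (h : N.Appears k y n z w (s + 1)) :
    ∃ m, n = m + 1 ∧ ∃ i j, N.IsReactantPair y z i j ∧
      ((∃ s' ≤ s, N.Appears k y m z w s') ∨
        ∃ s' < s, N.Appears k y m (N.S i ((j : ℕ) + 1)) w s') := by
  obtain ⟨hn, i, j, hp, hU | h'⟩ := (H.appears_succ_iff hz (H.ne_of_appears h) n s).1 h
  · refine ⟨n - 1, by omega, i, j, hp, ?_⟩
    obtain ⟨s', hs', z', hz', h'⟩ := H.exists_appears_of_appears_inter hU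
    have hz'y := H.ne_of_appears h'
    rcases hz' with rfl | rfl | rfl
    · rcases hp with ⟨hY, -⟩ | ⟨hY, -⟩
      exacts [absurd hY hz'y, Or.inl ⟨s', hs'.le, hY ▸ h'⟩]
    · rcases hp with ⟨-, hS⟩ | ⟨-, hS⟩
      exacts [Or.inl ⟨s', hs'.le, hS ▸ h'⟩, absurd hS hz'y]
    · exact Or.inr ⟨s', hs', h'⟩
  · exact ⟨n - 1, by omega, i, j, hp, Or.inl ⟨s, le_rfl, h'⟩⟩

theorem holds_of_appears (H : N.AppearanceHyp k y w) (P : σ → Prop) (hw : P w)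
    (hP : ∀ z i (j : Fin (N.L i)) m s, N.IsReactantPair y z i j →
      N.Appears k y m (N.S i ((j : ℕ) + 1)) w s → P (N.S i ((j : ℕ) + 1)) → P z)
    {n s : ℕ} {z : σ} (hz : ¬ N.inter z) (h : N.Appears k y n z w s) : P z := by
  induction s using Nat.strong_induction_on generalizing n z with
  | _ s ih =>
  rcases s with _ | s
  · exact ((appears_zero_iff k H.source_ne_enzyme).1 h).2 ▸ hw
  obtain ⟨m, -, i, j, hp, ⟨s', hs', h'⟩ | ⟨s', hs', h'⟩⟩ :=
    H.exists_pred_of_appears_succ hz h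
  · exact ih s' (by omega) hz h'
  · exact hP z i j m s' hp h' (ih s' (by omega) (H.assumption1.not_inter_S j.isLt) h')

theorem part_eq_of_appears (H : N.AppearanceHyp k y w) {part : σ → ℕ}
    (hpart : N.IsPartition part) (hyw : part y ≠ part w) {n s : ℕ} {z : σ} (hz : ¬ N.inter z)
    (h : N.Appears k y n z w s) : part z = part w := by
  refine H.holds_of_appears (fun z => part z = part w) rfl (fun z i j _ _ hp _ hS => ?_) hz h
  obtain ⟨-, rfl⟩ := hp.eq_of_part_ne hpart (hS ▸ hyw.symm)
  rwa [hpart.part_S_eq j.isLt.le j.isLt]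

theorem mem_substrateSet_of_appears (H : N.AppearanceHyp k y w) {part : σ → ℕ}
    (hpart : N.IsPartition part) (hyw : part y ≠ part w) {c : N.ι} (hc : N.Y c = y)
    {n s : ℕ} {z : σ} (hz : ¬ N.inter z) (h : N.Appears k y n z w s)
    (hzc : z ∈ N.substrateSet c) : w ∈ N.substrateSet c := by
  refine (H.holds_of_appears (fun z => z ∈ N.substrateSet c → w ∈ N.substrateSet c) id
    (fun z i j _ _ hp hS hSc hzc => ?_) hz h) hzc
  obtain ⟨hY, rfl⟩ := hp.eq_of_part_ne hpart
    (H.part_eq_of_appears hpart hyw (H.assumption1.not_inter_S j.isLt) hS ▸ hyw.symm)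
  obtain ⟨j', hj', hj'c⟩ := hzc
  obtain rfl := H.assumption1.eq_of_Y_eq_of_S_eq j.isLt.le hj' (hY.trans hc.symm) hj'c
  exact hSc ⟨_, j.isLt, rfl⟩

end AppearanceHyp

def AppearsViaSubstrate (N : A1Network σ) (k : N.Param → ℝ) (y : σ) (m : ℕ) (z x : σ)
    (s : ℕ) : Prop :=
  ∃ i, ∃ j : Fin (N.L i), N.Y i = y ∧ N.S i ((j : ℕ) + 1) = x ∧
    ∃ s', s' + 2 ≤ s ∧ N.Appears k y m z (N.S i j) s'

namespace AppearsViaSubstrate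

variable {N : A1Network σ} {k : N.Param → ℝ} {y x : σ}

theorem mono {m : ℕ} {z : σ} {s s' : ℕ} (h : N.AppearsViaSubstrate k y m z x s)
    (hs : s ≤ s') : N.AppearsViaSubstrate k y m z x s' := by
  obtain ⟨i, j, hY, hS, t, ht, h⟩ := h
  exact ⟨i, j, hY, hS, t, ht.trans hs, h⟩

theorem lift (H : N.AppearanceHyp k y x) {m m' d s : ℕ} {z z' : σ}
    (h : N.AppearsViaSubstrate k y m z x s)
    (hstep : ∀ w, N.AppearanceHyp k y w → ∀ t, N.Appears k y m z w t →
      N.Appears k y m' z' w (t + d)) :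
    N.AppearsViaSubstrate k y m' z' x (s + d) := by
  obtain ⟨i, j, hY, hS, t, ht, h⟩ := h
  have hSy : N.S i j ≠ y := hY ▸ (H.Y_ne_S i j j.isLt.le).symm
  exact ⟨i, j, hY, hS, t + d, by omega,
    hstep _ (H.withSource (H.assumption1.not_inter_S j.isLt.le) hSy) t h⟩

end AppearsViaSubstrate

namespace AppearanceHyp

variable {N : A1Network σ} {k : N.Param → ℝ} {y x : σ} {part : σ → ℕ}

theorem exists_appearsViaSubstrate (H : N.AppearanceHyp k y x) (hpart : N.IsPartition part)
    (hyx : part y ≠ part x) {n s : ℕ} {z : σ} (hz : ¬ N.inter z) (hzx : z ≠ x)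
    (h : N.Appears k y n z x s) : ∃ m, n = m + 1 ∧ N.AppearsViaSubstrate k y m z x s := by
  induction s using Nat.strong_induction_on generalizing n z with
  | _ s ih =>
  rcases s with _ | s
  · exact absurd ((appears_zero_iff k H.source_ne_enzyme).1 h).2 hzx
  obtain ⟨m, rfl, i, j, hp, ⟨s', hs', h'⟩ | ⟨s', hs', h'⟩⟩ :=
    H.exists_pred_of_appears_succ hz h
  · obtain ⟨m', rfl, hv⟩ := ih s' (by omega) hz hzx h'
    exact ⟨_, rfl,
      (hv.lift H fun w Hw t => Hw.appears_succ_of_isReactantPair hp).mono (by omega)⟩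
  have hS := H.assumption1.not_inter_S j.isLt
  obtain ⟨hY, rfl⟩ := hp.eq_of_part_ne hpart (H.part_eq_of_appears hpart hyx hS h' ▸ hyx.symm)
  by_cases hx : N.S i ((j : ℕ) + 1) = x
  · refine ⟨m, rfl, i, j, hY, hx, m, by have := H.le_of_appears h'; omega, ?_⟩
    exact (H.withSource hz (hp.ne H.Y_ne_S)).appears_self hp m
  · obtain ⟨m', rfl, hv⟩ := ih s' (by omega) hS hx h'
    refine ⟨_, rfl, (hv.lift (d := 2) H fun w Hw t ht => ?_).mono (by omega)⟩
    exact Hw.appears_succ_of_appears_inter hp (Hw.appears_succ_inter (Or.inr (Or.inr rfl)) ht)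

theorem exists_appearsViaSubstrate_of_inter (H : N.AppearanceHyp k y x)
    (hpart : N.IsPartition part) (hyx : part y ≠ part x) {n s : ℕ} {i : N.ι}
    {j : Fin (N.L i)} (h : N.Appears k y n (N.U i ((j : ℕ) + 1)) x s)
    (hr : ¬ N.reactsTo (N.U i ((j : ℕ) + 1)) x) :
    ∃ m, n = m + 1 ∧ N.AppearsViaSubstrate k y m (N.U i ((j : ℕ) + 1)) x s := by
  obtain ⟨s', hs', z, hz, h'⟩ := H.exists_appears_of_appears_inter h
  have hzx : z ≠ x := by
    rintro rfl
    exact hr ⟨i, j, rfl, hz⟩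
  have hzn : ¬ N.inter z := by
    rcases hz with rfl | rfl | rfl
    exacts [H.assumption1.not_inter_Y i, H.assumption1.not_inter_S j.isLt.le,
      H.assumption1.not_inter_S j.isLt]
  obtain ⟨m, rfl, hv⟩ := H.exists_appearsViaSubstrate hpart hyx hzn hzx h'
  exact ⟨m, rfl, (hv.lift H fun w Hw t => Hw.appears_succ_inter hz).mono (by omega)⟩

theorem mem_substrateSet_of_appears_inter (H : N.AppearanceHyp k y x)
    (hpart : N.IsPartition part) (hyx : part y ≠ part x) {i : N.ι} {j : Fin (N.L i)}
    (hYx : part (N.Y i) ≠ part x) {c : N.ι} (hc : N.Y c = y)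
    (hci : N.substrateSet c = N.substrateSet i) {n s : ℕ}
    (h : N.Appears k y n (N.U i ((j : ℕ) + 1)) x s) : x ∈ N.substrateSet i := by
  obtain ⟨s', -, z, hz, h'⟩ := H.exists_appears_of_appears_inter h
  have hzi : z ∈ N.substrateSet i := by
    rcases hz with rfl | rfl | rfl
    · exact absurd (H.part_eq_of_appears hpart hyx (H.assumption1.not_inter_Y i) h') hYx
    · exact ⟨j, j.isLt.le, rfl⟩
    · exact ⟨(j : ℕ) + 1, j.isLt, rfl⟩
  have hzn : ¬ N.inter z := by
    obtain ⟨j', hj', rfl⟩ := hzi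
    exact H.assumption1.not_inter_S hj'
  rw [← hci] at hzi ⊢
  exact H.mem_substrateSet_of_appears hpart hyx hc hzn h' hzi

end AppearanceHyp

theorem monomial_y_pow_v_structure_general
    (N : A1Network σ) (h1 : N.Assumption1)
    (part : σ → ℕ) (hpart : N.IsPartition part)
    (k : N.Param → ℝ) (hk : ∀ r, 0 < k r)
    (v x y : σ) (iv : N.ι) (jv : Fin (N.L iv)) (hv : v = N.U iv ((jv : ℕ) + 1))
    (iy : N.ι) (hy : y = N.Y iy)
    (hSV : {z : σ | ∃ j ≤ N.L iy, z = N.S iy j} = {z : σ | ∃ j ≤ N.L iv, z = N.S iv j})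
    (hx : ¬ N.inter x)
    (hyα : part y ≠ part x) (hYtildeα : part (N.Y iv) ≠ part x)
    (r ℓ : ℕ)
    (happ : MvPolynomial.coeff (Finsupp.single y r + Finsupp.single v 1)
      (N.deriv k ℓ x) ≠ 0) :
    (∃ j ≤ N.L iv, x = N.S iv j)
    ∧ (N.reactsTo v x ∨
        (1 ≤ r ∧ 2 ≤ ℓ ∧ ∃ i, ∃ j : Fin (N.L i), ∃ zw : σ,
          y = N.Y i ∧ zw = N.S i (j : ℕ) ∧ x = N.S i ((j : ℕ) + 1) ∧
          ∃ t, t < r ∧ ∃ ii, ii ≤ ℓ - 2 ∧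
            MvPolynomial.coeff (Finsupp.single y t + Finsupp.single v 1)
              (N.deriv k ii zw) ≠ 0))
    ∧ (¬ N.reactsTo v x → 1 ≤ r →
        (∀ ℓ' < ℓ,
          MvPolynomial.coeff (Finsupp.single y r + Finsupp.single v 1)
            (N.deriv k ℓ' x) = 0) →
        ∃ i, ∃ j : Fin (N.L i), ∃ zw : σ,
          y = N.Y i ∧ zw = N.S i (j : ℕ) ∧ x = N.S i ((j : ℕ) + 1) ∧
          ∃ ii, ii ≤ ℓ - 2 ∧
            MvPolynomial.coeff (Finsupp.single y (r - 1) + Finsupp.single v 1)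
              (N.deriv k ii zw) ≠ 0) := by
  subst hv
  have H : N.AppearanceHyp k y x :=
    ⟨h1, hpart.Y_ne_S, hk, hy ▸ h1.not_inter_Y iy, hx, fun h => hyα (congrArg part h.symm)⟩
  have hvia := fun hr => H.exists_appearsViaSubstrate_of_inter hpart hyα happ hr
  refine ⟨H.mem_substrateSet_of_appears_inter hpart hyα hYtildeα hy.symm hSV happ, ?_, ?_⟩
  · refine or_iff_not_imp_left.2 fun hr => ?_
    obtain ⟨m, rfl, i, j, hY, hS, s, hs, h⟩ := hvia hr
    exact ⟨by omega, by omega, i, j, _, hY.symm, rfl, hS.symm, m, by omega, s, by omega, h⟩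
  · intro hr _ _
    obtain ⟨m, rfl, i, j, hY, hS, s, hs, h⟩ := hvia hr
    exact ⟨i, j, _, hY.symm, rfl, hS.symm, s, by omega, by rwa [Nat.add_sub_cancel]⟩

/-- **Lemma.** For a network satisfying Assumptions 1 and 2 (with an explicit partition
`part`), let `v` be the intermediate of block `jv+1` of a component `iv` (whose enzyme is
`Ỹ = Y iv`), and let `y = Y iy` be a non-intermediate acting as an enzyme in a connected
component `iy` whose set of substrates and products equals `𝒮_V`, the set of substrates
and products of the component of `v`. Let `x` be a non-intermediate lying in a class
`α ≥ 1` of the partition not containing `y` nor `Ỹ`. If a monomial `y^r · v` appears in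
`x^{(ℓ)}`, `ℓ ≥ 1`, then `x ∈ 𝒮_V`; moreover either `v` reacts to `x`, or `r ≥ 1`,
`ℓ ≥ 2`, and a monomial `y^t · v` with `t < r` appears in `z_w^{(i)}` for some
`i ≤ ℓ - 2`, where `z_w` comes from a block `Y + Z_w ⇄ W → Y + X` of the network; and if
`r ≥ 1` and `ℓ` is minimal, then `t = r - 1`. -/
theorem monomial_y_pow_v_structure
    (N : A1Network σ) (h1 : N.Assumption1)
    (part : σ → ℕ) (hpart : N.IsPartition part)
    (k : N.Param → ℝ) (hk : ∀ r, 0 < k r)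
    (v x y : σ) (iv : N.ι) (jv : Fin (N.L iv)) (hv : v = N.U iv ((jv : ℕ) + 1))
    (iy : N.ι) (hy : y = N.Y iy)
    (hSV : {z : σ | ∃ j ≤ N.L iy, z = N.S iy j} = {z : σ | ∃ j ≤ N.L iv, z = N.S iv j})
    (hx : ¬ N.inter x)
    (hxα : 1 ≤ part x) (hyα : part y ≠ part x) (hYtildeα : part (N.Y iv) ≠ part x)
    (r ℓ : ℕ) (hℓ : 1 ≤ ℓ)
    (happ : MvPolynomial.coeff (Finsupp.single y r + Finsupp.single v 1)
      (N.deriv k ℓ x) ≠ 0) :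
    (∃ j ≤ N.L iv, x = N.S iv j)
    ∧ (N.reactsTo v x ∨
        (1 ≤ r ∧ 2 ≤ ℓ ∧ ∃ i, ∃ j : Fin (N.L i), ∃ zw : σ,
          y = N.Y i ∧ zw = N.S i (j : ℕ) ∧ x = N.S i ((j : ℕ) + 1) ∧
          ∃ t, t < r ∧ ∃ ii, ii ≤ ℓ - 2 ∧
            MvPolynomial.coeff (Finsupp.single y t + Finsupp.single v 1)
              (N.deriv k ii zw) ≠ 0))
    ∧ (¬ N.reactsTo v x → 1 ≤ r →
        (∀ ℓ' < ℓ,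
          MvPolynomial.coeff (Finsupp.single y r + Finsupp.single v 1)
            (N.deriv k ℓ' x) = 0) →
        ∃ i, ∃ j : Fin (N.L i), ∃ zw : σ,
          y = N.Y i ∧ zw = N.S i (j : ℕ) ∧ x = N.S i ((j : ℕ) + 1) ∧
          ∃ ii, ii ≤ ℓ - 2 ∧
            MvPolynomial.coeff (Finsupp.single y (r - 1) + Finsupp.single v 1)
              (N.deriv k ii zw) ≠ 0) :=
  monomial_y_pow_v_structure_general N h1 part hpart k hk v x y iv jv hv iy hy hSV hx hyα hYtildeα r
    ℓ happ

end A1Network
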